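/- arXiv:math/0610981 — 8 statements merged into one kernel-verified Lean document; each statement's English description precedes it below -/
import Mathlib

section
/- Let R be a commutative ring with identity, let n be a positive integer, let m ≥ 3 be an odd integer, and let a_{ij} ∈ R for i = 1,…,m and j = 1,…,n. Then the sum over all (m−1)-tuples (σ₁,…,σ_{m−1}) of permutations of {1,…,n} of ε(σ₁⋯σ_{m−1}) times ∏_{1≤i<j≤n} (a_{mj}·∏_{s=1}^{m−1} a_{s,σ_s(j)} − a_{mi}·∏_{s=1}^{m−1} a_{s,σ_s(i)}) equals ∏_{1≤i<j≤n} (a_{1j}−a_{1i})⋯(a_{mj}−a_{mi}). -/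
/-!
Both sides are products of Vandermonde determinants `det (v j ^ i) = ∏ i < j, (v j - v i)`.
Expand the determinant of each product vector `v_σ j = c j * ∏ s, b s (σ s j)` by the Leibniz
formula in a permutation `π`. Summing over `σ`
with the sign `∏ s, ε(σ s)` factors the result, for each `π`, into the Leibniz term of `c` times
`∏ s, ∑ τ, ε(τ) ∏ i, b s (τ (π i)) ^ i = ∏ s, ε(π) det (b s j ^ i)`. When the number of
factors `s` is even the signs `ε(π)` cancel and the sum over `π` reassembles `det (c j ^ i)`.
-/

open Finset Equiv Matrix

section Vandermonde

variable {R : Type*} [CommRing R] {n : ℕ}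

theorem det_vandermonde_eq_sum_sign_mul (v : Fin n → R) :
    (vandermonde v).det = ∑ π : Perm (Fin n), ((Perm.sign π : ℤ) : R) * ∏ i, v (π i) ^ (i : ℕ) := by
  rw [det_apply]
  refine sum_congr rfl fun π _ => ?_
  rw [Units.smul_def, zsmul_eq_mul]
  simp only [vandermonde_apply]

theorem sum_sign_mul_prod_perm_pow (v : Fin n → R) (π : Perm (Fin n)) :
    ∑ τ : Perm (Fin n), ((Perm.sign τ : ℤ) : R) * ∏ i, v (τ (π i)) ^ (i : ℕ)
      = ((Perm.sign π : ℤ) : R) * (vandermonde v).det := by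
  rw [det_vandermonde_eq_sum_sign_mul, mul_sum]
  refine Fintype.sum_equiv (Equiv.mulRight π) _ _ fun τ => ?_
  have hπ : ((Perm.sign π : ℤ) : R) * (Perm.sign π : ℤ) = 1 := by
    rw [← Int.cast_mul, Int.units_coe_mul_self, Int.cast_one]
  simp only [coe_mulRight, Perm.mul_apply, Perm.sign_mul, Units.val_mul, Int.cast_mul]
  linear_combination (-((Perm.sign τ : ℤ) : R) * ∏ i, v (τ (π i)) ^ (i : ℕ)) * hπ

theorem sum_sign_smul_det_vandermonde_mul_prod {ι : Type*} [Fintype ι] [DecidableEq ι]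
    (hι : Even (Fintype.card ι)) (c : Fin n → R) (b : ι → Fin n → R) :
    ∑ σ : ι → Perm (Fin n), ((∏ s, Perm.sign (σ s) : ℤˣ) : ℤ) •
        (vandermonde fun j => c j * ∏ s, b s (σ s j)).det
      = (vandermonde c).det * ∏ s, (vandermonde (b s)).det := by
  have hsign : ∀ π : Perm (Fin n), ((Perm.sign π : ℤ) : R) ^ Fintype.card ι = 1 := fun π => by
    rw [← Int.cast_pow, ← Units.val_pow_eq_pow_val, Int.units_pow_eq_pow_mod_two,
      Nat.even_iff.mp hι, pow_zero, Units.val_one, Int.cast_one]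
  calc
    _ = ∑ σ : ι → Perm (Fin n), ∑ π : Perm (Fin n),
          ((Perm.sign π : ℤ) : R) * (∏ i, c (π i) ^ (i : ℕ)) *
            ∏ s, (((Perm.sign (σ s) : ℤ) : R) * ∏ i, b s (σ s (π i)) ^ (i : ℕ)) := by
      refine sum_congr rfl fun σ _ => ?_
      rw [det_vandermonde_eq_sum_sign_mul, zsmul_eq_mul, mul_sum]
      refine sum_congr rfl fun π _ => ?_
      simp only [mul_pow, prod_mul_distrib, ← prod_pow]
      rw [prod_comm (f := fun i s => b s (σ s (π i)) ^ (i : ℕ))]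
      push_cast
      ring
    _ = ∑ π : Perm (Fin n), ((Perm.sign π : ℤ) : R) * (∏ i, c (π i) ^ (i : ℕ)) *
          ∏ s, ∑ τ : Perm (Fin n), ((Perm.sign τ : ℤ) : R) * ∏ i, b s (τ (π i)) ^ (i : ℕ) := by
      rw [sum_comm]
      simp only [Fintype.prod_sum, mul_sum]
    _ = ∑ π : Perm (Fin n), ((Perm.sign π : ℤ) : R) * (∏ i, c (π i) ^ (i : ℕ)) *
          ∏ s, (vandermonde (b s)).det := by
      refine sum_congr rfl fun π _ => ?_
      simp only [sum_sign_mul_prod_perm_pow, prod_mul_distrib, prod_const, card_univ, hsign,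
        one_mul]
    _ = _ := by rw [← sum_mul, ← det_vandermonde_eq_sum_sign_mul]

end Vandermonde

theorem stmt0_general {R : Type*} [CommRing R] (n m : ℕ) (hm : Even m)
    (a : Fin (m + 1) → Fin n → R) :
    ∑ σ : Fin m → Equiv.Perm (Fin n),
      (((∏ s, Equiv.Perm.sign (σ s) : ℤˣ) : ℤ)) •
        ∏ i : Fin n, ∏ j ∈ Finset.Ioi i,
          (a (Fin.last m) j * ∏ s : Fin m, a s.castSucc ((σ s) j)
            - a (Fin.last m) i * ∏ s : Fin m, a s.castSucc ((σ s) i))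
      = ∏ i : Fin n, ∏ j ∈ Finset.Ioi i, ∏ s : Fin (m + 1), (a s j - a s i) := by
  have key := sum_sign_smul_det_vandermonde_mul_prod (by simpa using hm) (a (Fin.last m))
    fun s : Fin m => a s.castSucc
  rw [mul_comm, ← Fin.prod_univ_castSucc (fun s => (vandermonde (a s)).det)] at key
  simp only [det_vandermonde] at key
  rw [key, prod_comm]
  exact prod_congr rfl fun i _ => prod_comm

/-- Lemma 2.1: for an odd number `m+1 ≥ 3` of rows (`m` even, `m ≥ 2`). -/
theorem stmt0 {R : Type*} [CommRing R] (n m : ℕ) (hn : 0 < n) (hm : Even m) (hm2 : 2 ≤ m)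
    (a : Fin (m + 1) → Fin n → R) :
    ∑ σ : Fin m → Equiv.Perm (Fin n),
      (((∏ s, Equiv.Perm.sign (σ s) : ℤˣ) : ℤ)) •
        ∏ i : Fin n, ∏ j ∈ Finset.Ioi i,
          (a (Fin.last m) j * ∏ s : Fin m, a s.castSucc ((σ s) j)
            - a (Fin.last m) i * ∏ s : Fin m, a s.castSucc ((σ s) i))
      = ∏ i : Fin n, ∏ j ∈ Finset.Ioi i, ∏ s : Fin (m + 1), (a s j - a s i) :=
  stmt0_general n m hm a
end

section
/- Let R be a commutative ring with identity and let m be an odd positive integer. Call a subset S of R regular if a − b is a unit of R for all distinct a, b ∈ S. Then for any regular subsets A₁,…,A_m of R each of cardinality n ≥ 1, there exist enumerations a_{i1},…,a_{in} of the elements of each A_i (1 ≤ i ≤ m) such that the n products ∏_{i=1}^m a_{ij} (1 ≤ j ≤ n) are pairwise distinct. -/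
open Finset Matrix Equiv

private lemma key_sum {R : Type*} [CommRing R] (n k : ℕ) (hk : Even k)
    (b : Fin k → Fin n → R) (c : Fin n → R) :
    ∑ σ : Fin k → Equiv.Perm (Fin n),
      (∏ r, ((Equiv.Perm.sign (σ r) : ℤ) : R)) *
        (Matrix.vandermonde (fun j => c j * ∏ r, b r (σ r j))).det
      = (∏ r, (Matrix.vandermonde (b r)).det) * (Matrix.vandermonde c).det := by
  classical
  have hdet : ∀ v : Fin n → R, (Matrix.vandermonde v).det
      = ∑ π : Equiv.Perm (Fin n), ((Equiv.Perm.sign π : ℤ) : R) * ∏ l, v (π l) ^ (l : ℕ) := by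
    intro v
    rw [Matrix.det_apply']
    rfl
  have hsq : ∀ π : Equiv.Perm (Fin n),
      ((Equiv.Perm.sign π : ℤ) : R) * ((Equiv.Perm.sign π : ℤ) : R) = 1 := by
    intro π
    rw [← Int.cast_mul, ← Units.val_mul, Int.units_mul_self]
    simp
  calc
    ∑ σ : Fin k → Equiv.Perm (Fin n),
        (∏ r, ((Equiv.Perm.sign (σ r) : ℤ) : R)) *
          (Matrix.vandermonde (fun j => c j * ∏ r, b r (σ r j))).det
      = ∑ π : Equiv.Perm (Fin n), ((Equiv.Perm.sign π : ℤ) : R) * (∏ l, c (π l) ^ (l : ℕ)) *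
          ∏ r, (∑ τ : Equiv.Perm (Fin n),
            ((Equiv.Perm.sign τ : ℤ) : R) * ∏ l, b r (τ (π l)) ^ (l : ℕ)) := by
        simp_rw [hdet, Finset.mul_sum]
        rw [Finset.sum_comm]
        refine Finset.sum_congr rfl fun π _ => ?_
        have hps : (∏ r : Fin k, ∑ τ : Equiv.Perm (Fin n),
              ((Equiv.Perm.sign τ : ℤ) : R) * ∏ l, b r (τ (π l)) ^ (l : ℕ))
            = ∑ σ : Fin k → Equiv.Perm (Fin n),
              ∏ r, (((Equiv.Perm.sign (σ r) : ℤ) : R) * ∏ l, b r ((σ r) (π l)) ^ (l : ℕ)) :=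
          Fintype.prod_sum _
        rw [hps, Finset.mul_sum]
        refine Finset.sum_congr rfl fun σ _ => ?_
        simp only [mul_pow, Finset.prod_mul_distrib, ← Finset.prod_pow]
        rw [Finset.prod_comm]
        ring
    _ = (∏ r, (Matrix.vandermonde (b r)).det) * (Matrix.vandermonde c).det := by
        have hinner : ∀ (π : Equiv.Perm (Fin n)) (w : Fin n → R),
            (∑ τ : Equiv.Perm (Fin n), ((Equiv.Perm.sign τ : ℤ) : R) * ∏ l, w (τ (π l)) ^ (l : ℕ))
            = ((Equiv.Perm.sign π : ℤ) : R) * (Matrix.vandermonde w).det := by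
          intro π w
          rw [hdet w, Finset.mul_sum]
          refine Fintype.sum_equiv (Equiv.mulRight π) _ _ fun τ => ?_
          simp only [Equiv.coe_mulRight, Equiv.Perm.sign_mul, Equiv.Perm.mul_apply,
            Units.val_mul, Int.cast_mul]
          linear_combination (-(((Equiv.Perm.sign τ : ℤ) : R) *
            ∏ l, w (τ (π l)) ^ (l : ℕ))) * hsq π
        simp_rw [hinner]
        have hpk : ∀ π : Equiv.Perm (Fin n), (∏ _r : Fin k, ((Equiv.Perm.sign π : ℤ) : R)) = 1 := by
          intro π
          rw [Finset.prod_const]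
          obtain ⟨s, rfl⟩ := hk
          rw [Finset.card_univ, Fintype.card_fin, ← two_mul, pow_mul, sq, hsq π, one_pow]
        calc
          ∑ π : Equiv.Perm (Fin n), ((Equiv.Perm.sign π : ℤ) : R) * (∏ l, c (π l) ^ (l : ℕ)) *
              ∏ r, (((Equiv.Perm.sign π : ℤ) : R) * (Matrix.vandermonde (b r)).det)
            = ∑ π : Equiv.Perm (Fin n), ((Equiv.Perm.sign π : ℤ) : R) * (∏ l, c (π l) ^ (l : ℕ)) *
              ∏ r, (Matrix.vandermonde (b r)).det := by
              refine Finset.sum_congr rfl fun π _ => ?_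
              rw [Finset.prod_mul_distrib, hpk π, one_mul]
          _ = (∏ r, (Matrix.vandermonde (b r)).det) * (Matrix.vandermonde c).det := by
              rw [← Finset.sum_mul, mul_comm, hdet c]

/-- Theorem 2.1: products along enumerations of regular subsets of a commutative ring. -/
theorem stmt1 {R : Type*} [CommRing R] (m n : ℕ) (hm : Odd m) (hn : 0 < n)
    (A : Fin m → Finset R) (hcard : ∀ i, (A i).card = n)
    (hreg : ∀ i, ∀ a ∈ A i, ∀ b ∈ A i, a ≠ b → IsUnit (a - b)) :
    ∃ a : Fin m → Fin n → R,
      (∀ i, Function.Injective (a i) ∧ ∀ j, a i j ∈ A i) ∧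
      Function.Injective fun j : Fin n => ∏ i, a i j := by
  classical
  obtain ⟨t, rfl⟩ := hm
  set e : Fin (2 * t + 1) → Fin n → R :=
    fun i j => (((A i).equivFinOfCardEq (hcard i)).symm j : R) with he
  have he1 : ∀ i, Function.Injective (e i) := by
    intro i
    exact Subtype.val_injective.comp (Equiv.injective _)
  have he2 : ∀ i j, e i j ∈ A i := by
    intro i j
    exact (((A i).equivFinOfCardEq (hcard i)).symm j).2
  by_cases hn1 : n = 1
  · subst hn1
    exact ⟨e, fun i => ⟨Function.injective_of_subsingleton _, he2 i⟩,
      Function.injective_of_subsingleton _⟩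
  · have hn2 : 1 < n := by omega
    obtain ⟨x, hx, y, hy, hxy⟩ := Finset.one_lt_card.mp
      (show 1 < (A 0).card by rw [hcard 0]; exact hn2)
    haveI : Nontrivial R := ⟨⟨x, y, hxy⟩⟩
    set b : Fin (2 * t) → Fin n → R := fun r => e (Fin.castSucc r) with hb
    set c : Fin n → R := e (Fin.last (2 * t)) with hc
    have hvan : ∀ i : Fin (2 * t + 1), IsUnit (Matrix.vandermonde (e i)).det := by
      intro i
      rw [Matrix.det_vandermonde]
      refine Finset.prod_induction _ IsUnit (fun a b ha hb => ha.mul hb) isUnit_one ?_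
      intro j _
      refine Finset.prod_induction _ IsUnit (fun a b ha hb => ha.mul hb) isUnit_one ?_
      intro l hl
      refine hreg i _ (he2 i l) _ (he2 i j) fun h => ?_
      exact absurd (he1 i h) (Finset.mem_Ioi.mp hl).ne'
    have hne0 : (∏ r, (Matrix.vandermonde (b r)).det) * (Matrix.vandermonde c).det ≠ 0 := by
      refine IsUnit.ne_zero (IsUnit.mul ?_ (hvan _))
      exact (Finset.prod_induction _ IsUnit (fun a b ha hb => ha.mul hb) isUnit_one
        fun r _ => hvan _)
    have hex : ∃ σ : Fin (2 * t) → Equiv.Perm (Fin n),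
        (Matrix.vandermonde (fun j => c j * ∏ r, b r (σ r j))).det ≠ 0 := by
      by_contra hcon
      push_neg at hcon
      have h0 : ∑ σ : Fin (2 * t) → Equiv.Perm (Fin n),
          (∏ r, ((Equiv.Perm.sign (σ r) : ℤ) : R)) *
            (Matrix.vandermonde (fun j => c j * ∏ r, b r (σ r j))).det = 0 :=
        Finset.sum_eq_zero fun σ _ => by rw [hcon σ, mul_zero]
      rw [key_sum n (2 * t) ⟨t, (two_mul t)⟩ b c] at h0
      exact hne0 h0
    obtain ⟨σ, hσ⟩ := hex
    have hQ : Function.Injective fun j => c j * ∏ r, b r (σ r j) := by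
      intro j1 j2 h12
      simp only at h12
      by_contra hne
      apply hσ
      rw [Matrix.det_vandermonde]
      rcases lt_or_gt_of_ne hne with h | h
      · refine Finset.prod_eq_zero (Finset.mem_univ j1) ?_
        refine Finset.prod_eq_zero (Finset.mem_Ioi.mpr h) ?_
        rw [sub_eq_zero]
        exact h12.symm
      · refine Finset.prod_eq_zero (Finset.mem_univ j2) ?_
        refine Finset.prod_eq_zero (Finset.mem_Ioi.mpr h) ?_
        rw [sub_eq_zero]
        exact h12
    set aa : Fin (2 * t + 1) → Fin n → R := Fin.snoc (fun r => fun j => b r (σ r j)) c with haa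
    refine ⟨aa, ?_, ?_⟩
    · intro i
      induction i using Fin.lastCases with
      | last =>
        simp only [haa, Fin.snoc_last]
        exact ⟨he1 _, he2 _⟩
      | cast r =>
        simp only [haa, Fin.snoc_castSucc]
        exact ⟨(he1 _).comp (Equiv.injective (σ r)), fun j => he2 _ _⟩
    · have hprod : (fun j : Fin n => ∏ i, aa i j)
          = fun j => c j * ∏ r, b r (σ r j) := by
        funext j
        rw [Fin.prod_univ_castSucc]
        simp only [haa, Fin.snoc_castSucc, Fin.snoc_last]
        ring
      rw [hprod]
      exact hQ
end

section
/- Let G be an additive abelian group whose torsion subgroup is cyclic, let m be an odd positive integer, and let A₁,…,A_m be subsets of G each of cardinality n ≥ 1. Then the elements of each A_i can be listed as a_{i1},…,a_{in} so that the n sums ∑_{i=1}^m a_{ij} (1 ≤ j ≤ n) are pairwise distinct. -/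
/-!
The finitely generated subgroup spanned by the `Aᵢ` has cyclic torsion, so it embeds into `ℂˣ`:
its free part through `exp` of a `ℤ`-linear map `v ↦ ∑ vⱼ xʲ` with `x` transcendental, its torsion
part through roots of unity; the absolute value separates the two. This turns the problem into
one about products `∏ᵢ bᵢ(σᵢ j)` of complex numbers, where `bᵢ` is injective.

For the Vandermonde matrix `V`, expanding determinants gives
`∑_σ (∏ᵢ sign σᵢ) det V(j ↦ ∏ᵢ bᵢ(σᵢ j)) = n! ∏ᵢ det V(bᵢ)`, because each permutation `u` of the
expansion contributes `(sign u)^(m+1) = 1` for odd `m`. The right side is nonzero, so some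
`det V(j ↦ ∏ᵢ bᵢ(σᵢ j))` is nonzero, i.e. these products are pairwise distinct.
-/

open Finset Matrix Equiv Equiv.Perm Function
open scoped Nat DirectSum

section Vandermonde

variable {R : Type*} [CommRing R] {n : ℕ}

theorem det_vandermonde_eq_sum_sign (v : Fin n → R) :
    (vandermonde v).det = ∑ u : Perm (Fin n), (sign u : R) * ∏ j, v (u j) ^ (j : ℕ) := by
  simp [det_apply', vandermonde]

theorem sum_sign_mul_prod_pow_comp_perm (v : Fin n → R) (u : Perm (Fin n)) :
    ∑ s : Perm (Fin n), (sign s : R) * ∏ j, v (s (u j)) ^ (j : ℕ)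
      = (sign u : R) * (vandermonde v).det := by
  rw [det_vandermonde_eq_sum_sign, mul_sum, ← Equiv.sum_comp (Equiv.mulRight u⁻¹)]
  refine sum_congr rfl fun t _ => ?_
  simp only [coe_mulRight, Perm.mul_apply, Perm.coe_inv, symm_apply_apply, Perm.sign_mul,
    sign_inv, Units.val_mul, Int.cast_mul]
  ring

theorem sum_sign_mul_det_vandermonde_prod {m : ℕ} (hm : Odd m) (b : Fin m → Fin n → R) :
    ∑ σ : Fin m → Perm (Fin n),
        (∏ i, (sign (σ i) : R)) * (vandermonde fun j => ∏ i, b i (σ i j)).det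
      = n ! * ∏ i, (vandermonde (b i)).det := by
  have hsign_pow : ∀ u : Perm (Fin n), (sign u : R) * (sign u : R) ^ m = 1 := by
    intro u
    have : sign u ^ (m + 1) = 1 := by
      rw [Int.units_pow_eq_pow_mod_two, Nat.succ_mod_two_eq_zero_iff.mpr (Nat.odd_iff.mp hm),
        pow_zero]
    rw [← pow_succ', ← Int.cast_pow, ← Units.val_pow_eq_pow_val, this]
    simp
  calc _ = ∑ u : Perm (Fin n), (sign u : R) * ∑ σ : Fin m → Perm (Fin n),
          ∏ i, ((sign (σ i) : R) * ∏ j, b i (σ i (u j)) ^ (j : ℕ)) := by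
        simp only [det_vandermonde_eq_sum_sign, mul_sum]
        rw [sum_comm]
        refine sum_congr rfl fun u _ => sum_congr rfl fun σ _ => ?_
        simp only [prod_mul_distrib, ← prod_pow]
        rw [prod_comm (s := univ) (t := univ)]
        ring
    _ = ∑ u : Perm (Fin n), (sign u : R) * ∏ i, ((sign u : R) * (vandermonde (b i)).det) := by
        refine sum_congr rfl fun u _ => ?_
        rw [← Fintype.prod_sum fun i (s : Perm (Fin n)) =>
          (sign s : R) * ∏ j, b i (s (u j)) ^ (j : ℕ)]
        simp only [sum_sign_mul_prod_pow_comp_perm]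
    _ = n ! * ∏ i, (vandermonde (b i)).det := by
        simp only [prod_mul_distrib, prod_const, card_univ, Fintype.card_fin, ← mul_assoc,
          hsign_pow, one_mul, sum_const, Fintype.card_perm, nsmul_eq_mul]

theorem exists_perm_injective_prod [IsDomain R] [CharZero R] {m : ℕ} (hm : Odd m)
    (b : Fin m → Fin n → R) (hb : ∀ i, Injective (b i)) :
    ∃ σ : Fin m → Perm (Fin n), Injective fun j => ∏ i, b i (σ i j) := by
  have hsum : ∑ σ : Fin m → Perm (Fin n),
      (∏ i, (sign (σ i) : R)) * (vandermonde fun j => ∏ i, b i (σ i j)).det ≠ 0 := by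
    rw [sum_sign_mul_det_vandermonde_prod hm]
    exact mul_ne_zero (Nat.cast_ne_zero.mpr n.factorial_ne_zero)
      (prod_ne_zero_iff.mpr fun i _ => det_vandermonde_ne_zero_iff.mpr (hb i))
  obtain ⟨σ, -, hσ⟩ := exists_ne_zero_of_sum_ne_zero hsum
  exact ⟨σ, det_vandermonde_ne_zero_iff.mp (right_ne_zero_of_mul hσ)⟩

end Vandermonde

theorem AddChar.map_sum_eq_prod {A M ι : Type*} [AddCommMonoid A] [CommMonoid M]
    (ψ : AddChar A M) (s : Finset ι) (f : ι → A) : ψ (∑ i ∈ s, f i) = ∏ i ∈ s, ψ (f i) := by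
  classical
  induction s using Finset.induction_on with
  | empty => simp
  | insert i s hi ih => rw [sum_insert hi, prod_insert hi, map_add_eq_mul, ih]

theorem exists_perm_injective_sum_of_addChar {G K : Type*} [AddCommGroup G] [CommRing K]
    [IsDomain K] [CharZero K] (ψ : AddChar G K) (hψ : Injective ψ) {m n : ℕ} (hm : Odd m)
    (b : Fin m → Fin n → G) (hb : ∀ i, Injective (b i)) :
    ∃ σ : Fin m → Perm (Fin n), Injective fun j => ∑ i, b i (σ i j) := by
  obtain ⟨σ, hσ⟩ := exists_perm_injective_prod hm (fun i j => ψ (b i j)) fun i => hψ.comp (hb i)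
  refine ⟨σ, fun j₁ j₂ h => hσ ?_⟩
  simpa only [AddChar.map_sum_eq_prod] using congrArg ψ h

theorem exists_injective_addMonoidHom_finsupp_int_real (ι : Type*) [Countable ι] :
    ∃ f : (ι →₀ ℤ) →+ ℝ, Injective f := by
  obtain ⟨e, he⟩ := Countable.exists_injective_nat ι
  have hx := transcendental_liouvilleNumber (le_refl 2)
  refine ⟨(Polynomial.aeval (liouvilleNumber 2)).toLinearMap.toAddMonoidHom.comp
    ((Polynomial.basisMonomials ℤ).repr.symm.toLinearMap.toAddMonoidHom.comp
      (Finsupp.mapDomain.addMonoidHom e)), ?_⟩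
  exact (transcendental_iff_injective.mp hx).comp
    ((Polynomial.basisMonomials ℤ).repr.symm.injective.comp (Finsupp.mapDomain_injective he))

theorem isAddCyclic_of_injective_of_isOfFinAddOrder {A B : Type*} [AddCommGroup A]
    [AddCommGroup B] [IsAddCyclic (AddCommGroup.torsion B)] (f : A →+ B) (hf : Injective f)
    (hA : ∀ a : A, IsOfFinAddOrder a) : IsAddCyclic A :=
  isAddCyclic_of_injective
    (f.codRestrict (AddCommGroup.torsion B) fun a => f.isOfFinAddOrder (hA a))
    fun _ _ h => hf (Subtype.ext_iff.mp h)

theorem IsAddCyclic.exists_injective_addChar_circle (B : Type*) [AddCommGroup B] [Finite B]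
    [IsAddCyclic B] : ∃ χ : AddChar B Circle, Injective χ := by
  have : NeZero (Nat.card B) := ⟨Nat.card_pos.ne'⟩
  let z := zmodAddCyclicAddEquiv (inferInstance : IsAddCyclic B)
  exact ⟨ZMod.toCircle.compAddMonoidHom z.symm.toAddMonoidHom,
    ZMod.injective_toCircle.comp z.symm.injective⟩

theorem exists_injective_addChar_prod {A B : Type*} [AddCommGroup A] [AddCommGroup B]
    (f : A →+ ℝ) (hf : Injective f) (χ : AddChar B Circle) (hχ : Injective χ) :
    ∃ ψ : AddChar (A × B) ℂ, Injective ψ := by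
  refine ⟨{ toFun := fun p => Complex.exp (f p.1) * χ p.2
            map_zero_eq_one' := by simp
            map_add_eq_mul' := fun p q => by
              simp only [Prod.fst_add, Prod.snd_add, map_add, Complex.ofReal_add,
                Complex.exp_add, AddChar.map_add_eq_mul, Circle.coe_mul]
              ring }, fun p q h => ?_⟩
  simp only [AddChar.coe_mk] at h
  have hfst : p.1 = q.1 := by
    have := congrArg norm h
    simp only [norm_mul, Complex.norm_exp_ofReal, Circle.norm_coe, mul_one] at this
    exact hf (Real.exp_injective this)
  rw [hfst, mul_right_inj' (Complex.exp_ne_zero _)] at h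
  exact Prod.ext hfst (hχ (Circle.coe_injective h))

theorem exists_injective_addChar_complex (H : Type*) [AddCommGroup H] [AddGroup.FG H]
    [IsAddCyclic (AddCommGroup.torsion H)] : ∃ ψ : AddChar H ℂ, Injective ψ := by
  obtain ⟨r, ι, _, p, hp, k, ⟨e⟩⟩ := AddCommGroup.equiv_free_prod_directSum_zmod H
  let F := ⨁ i, ZMod (p i ^ k i)
  have : ∀ i, NeZero (p i ^ k i) := fun i => ⟨pow_ne_zero _ (hp i).ne_zero⟩
  have : Finite F := Finite.of_equiv _ DFinsupp.equivFunOnFintype.symm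
  have : IsAddCyclic F :=
    isAddCyclic_of_injective_of_isOfFinAddOrder (e.symm.toAddMonoidHom.comp (AddMonoidHom.inr _ _))
      (e.symm.injective.comp (Prod.mk_right_injective 0)) isOfFinAddOrder_of_finite
  obtain ⟨f, hf⟩ := exists_injective_addMonoidHom_finsupp_int_real (Fin r)
  obtain ⟨χ, hχ⟩ := IsAddCyclic.exists_injective_addChar_circle F
  obtain ⟨ψ, hψ⟩ := exists_injective_addChar_prod f hf χ hχ
  exact ⟨ψ.compAddMonoidHom e.toAddMonoidHom, hψ.comp e.injective⟩

theorem exists_perm_injective_sum {G : Type*} [AddCommGroup G]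
    [IsAddCyclic (AddCommGroup.torsion G)] {m n : ℕ} (hm : Odd m) (b : Fin m → Fin n → G)
    (hb : ∀ i, Injective (b i)) :
    ∃ σ : Fin m → Perm (Fin n), Injective fun j => ∑ i, b i (σ i j) := by
  let H := AddSubgroup.closure (Set.range (uncurry b))
  have : IsAddCyclic (AddCommGroup.torsion H) :=
    isAddCyclic_of_injective_of_isOfFinAddOrder (H.subtype.comp (AddCommGroup.torsion H).subtype)
      (H.subtype_injective.comp Subtype.val_injective)
      fun x => AddSubmonoid.isOfFinAddOrder_coe.mp x.2
  obtain ⟨ψ, hψ⟩ := exists_injective_addChar_complex H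
  let b' : Fin m → Fin n → H := fun i j => ⟨b i j, AddSubgroup.subset_closure ⟨(i, j), rfl⟩⟩
  obtain ⟨σ, hσ⟩ := exists_perm_injective_sum_of_addChar ψ hψ hm b'
    fun i _ _ h => hb i (congrArg Subtype.val h)
  refine ⟨σ, fun j₁ j₂ h => hσ (Subtype.ext ?_)⟩
  simpa only [AddSubgroup.val_finsetSum] using h

theorem stmt2_general {G : Type*} [AddCommGroup G]
    (htor : IsAddCyclic (AddCommGroup.torsion G))
    (m n : ℕ) (hm : Odd m) (A : Fin m → Finset G) (hcard : ∀ i, (A i).card = n) :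
    ∃ a : Fin m → Fin n → G,
      (∀ i, Function.Injective (a i) ∧ ∀ j, a i j ∈ A i) ∧
      Function.Injective fun j : Fin n => ∑ i, a i j := by
  let e : ∀ i, Fin n ≃ A i := fun i => (Finset.equivFinOfCardEq (hcard i)).symm
  obtain ⟨σ, hσ⟩ := exists_perm_injective_sum hm (fun i j => (e i j : G))
    fun i => Subtype.val_injective.comp (e i).injective
  exact ⟨fun i j => e i (σ i j),
    fun i => ⟨Subtype.val_injective.comp ((e i).injective.comp (σ i).injective),
      fun j => (e i (σ i j)).2⟩, hσ⟩

/-- Theorem 1.1: additive theorem for abelian groups with cyclic torsion subgroup. -/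
theorem stmt2 {G : Type*} [AddCommGroup G]
    (htor : IsAddCyclic (AddCommGroup.torsion G))
    (m n : ℕ) (hm : Odd m) (hmpos : 0 < m) (hn : 0 < n)
    (A : Fin m → Finset G) (hcard : ∀ i, (A i).card = n) :
    ∃ a : Fin m → Fin n → G,
      (∀ i, Function.Injective (a i) ∧ ∀ j, a i j ∈ A i) ∧
      Function.Injective fun j : Fin n => ∑ i, a i j :=
  stmt2_general htor m n hm A hcard
end

section
/- Let N be a positive integer and consider the N×N×N Latin cube over ℤ/Nℤ whose (i,j,k) entry is i + j + k mod N. Then every n×n×n subcube (obtained by choosing n row indices, n column indices, and n layer indices, with n ≤ N) contains a Latin transversal, i.e., n cells no two in a common line whose entries are pairwise distinct. -/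
open Finset Equiv Matrix

private lemma sign_cast_sq {n : ℕ} (σ : Equiv.Perm (Fin n)) :
    ((Equiv.Perm.sign σ : ℤ) : ℂ) * ((Equiv.Perm.sign σ : ℤ) : ℂ) = 1 := by
  rcases Int.units_eq_one_or (Equiv.Perm.sign σ) with h | h <;> rw [h] <;> norm_num

/-- The key determinant identity: the signed sum over pairs of permutations of the
determinant of the entrywise "mixed" matrix equals the product of the three
determinants. -/
private lemma key_identity {n : ℕ} (A B C : Matrix (Fin n) (Fin n) ℂ) :
    ∑ σ : Equiv.Perm (Fin n), ∑ τ : Equiv.Perm (Fin n),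
      ((Equiv.Perm.sign σ : ℤ) : ℂ) * ((Equiv.Perm.sign τ : ℤ) : ℂ) *
        (Matrix.of fun i j => A i j * B (σ i) j * C (τ i) j).det
      = A.det * B.det * C.det := by
  classical
  set c : Equiv.Perm (Fin n) → ℂ := fun σ => ((Equiv.Perm.sign σ : ℤ) : ℂ) with hc
  -- sign is multiplicative after casting
  have hcmul : ∀ σ τ : Equiv.Perm (Fin n), c (σ * τ) = c σ * c τ := by
    intro σ τ
    simp only [hc, Equiv.Perm.sign_mul, Units.val_mul, Int.cast_mul]
  have hcsq : ∀ σ : Equiv.Perm (Fin n), c σ * c σ = 1 := fun σ => sign_cast_sq σ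
  -- expand each determinant by the Leibniz formula
  have hdet : ∀ σ τ : Equiv.Perm (Fin n),
      (Matrix.of fun i j => A i j * B (σ i) j * C (τ i) j).det
        = ∑ π : Equiv.Perm (Fin n),
            c π * ((∏ i, A (π i) i) * ((∏ i, B (σ (π i)) i) * (∏ i, C (τ (π i)) i))) := by
    intro σ τ
    rw [Matrix.det_apply']
    refine Finset.sum_congr rfl fun π _ => ?_
    simp only [Matrix.of_apply]
    rw [show (∏ i, A (π i) i * B (σ (π i)) i * C (τ (π i)) i)
          = (∏ i, A (π i) i) * ((∏ i, B (σ (π i)) i) * (∏ i, C (τ (π i)) i)) by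
        rw [← Finset.prod_mul_distrib, ← Finset.prod_mul_distrib]
        exact Finset.prod_congr rfl fun i _ => by ring]
  -- evaluate the inner signed sums over a fixed π
  have hinner : ∀ (M : Matrix (Fin n) (Fin n) ℂ) (π : Equiv.Perm (Fin n)),
      (∑ σ : Equiv.Perm (Fin n), c σ * ∏ i, M (σ (π i)) i) = c π * M.det := by
    intro M π
    have step1 : (∑ σ : Equiv.Perm (Fin n), c σ * ∏ i, M (σ (π i)) i)
        = ∑ σ : Equiv.Perm (Fin n), c π * (c (σ * π) * ∏ i, M ((σ * π) i) i) := by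
      refine Finset.sum_congr rfl fun σ _ => ?_
      have h1 : c (σ * π) = c σ * c π := hcmul σ π
      have h2 : (∏ i, M (σ (π i)) i) = ∏ i, M ((σ * π) i) i := by
        refine Finset.prod_congr rfl fun i _ => by rw [Equiv.Perm.mul_apply]
      rw [h2, h1]
      have h3 : c π * (c σ * c π * ∏ i, M ((σ * π) i) i)
          = (c π * c π) * (c σ * ∏ i, M ((σ * π) i) i) := by ring
      rw [h3, hcsq π, one_mul]
    rw [step1, ← Finset.mul_sum]
    congr 1
    have := Equiv.sum_comp (Equiv.mulRight π)
      (fun α : Equiv.Perm (Fin n) => c α * ∏ i, M (α i) i)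
    simp only [Equiv.coe_mulRight] at this
    rw [this, ← Matrix.det_apply']
  -- put everything together
  calc
    ∑ σ : Equiv.Perm (Fin n), ∑ τ : Equiv.Perm (Fin n),
        c σ * c τ * (Matrix.of fun i j => A i j * B (σ i) j * C (τ i) j).det
      = ∑ σ : Equiv.Perm (Fin n), ∑ τ : Equiv.Perm (Fin n), ∑ π : Equiv.Perm (Fin n),
          c σ * c τ * (c π * ((∏ i, A (π i) i)
            * ((∏ i, B (σ (π i)) i) * (∏ i, C (τ (π i)) i)))) := by
        refine Finset.sum_congr rfl fun σ _ => Finset.sum_congr rfl fun τ _ => ?_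
        rw [hdet σ τ, Finset.mul_sum]
    _ = ∑ π : Equiv.Perm (Fin n), ∑ σ : Equiv.Perm (Fin n), ∑ τ : Equiv.Perm (Fin n),
          c σ * c τ * (c π * ((∏ i, A (π i) i)
            * ((∏ i, B (σ (π i)) i) * (∏ i, C (τ (π i)) i)))) := by
        rw [show (∑ σ : Equiv.Perm (Fin n), ∑ τ : Equiv.Perm (Fin n), ∑ π : Equiv.Perm (Fin n),
            c σ * c τ * (c π * ((∏ i, A (π i) i)
              * ((∏ i, B (σ (π i)) i) * (∏ i, C (τ (π i)) i)))))
            = ∑ σ : Equiv.Perm (Fin n), ∑ π : Equiv.Perm (Fin n), ∑ τ : Equiv.Perm (Fin n),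
            c σ * c τ * (c π * ((∏ i, A (π i) i)
              * ((∏ i, B (σ (π i)) i) * (∏ i, C (τ (π i)) i)))) from
          Finset.sum_congr rfl fun σ _ => Finset.sum_comm]
        exact Finset.sum_comm
    _ = ∑ π : Equiv.Perm (Fin n), (c π * ∏ i, A (π i) i)
          * ((∑ σ : Equiv.Perm (Fin n), c σ * ∏ i, B (σ (π i)) i)
            * (∑ τ : Equiv.Perm (Fin n), c τ * ∏ i, C (τ (π i)) i)) := by
        refine Finset.sum_congr rfl fun π _ => ?_
        rw [Finset.sum_mul_sum, Finset.mul_sum]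
        refine Finset.sum_congr rfl fun σ _ => ?_
        rw [Finset.mul_sum]
        exact Finset.sum_congr rfl fun τ _ => by ring
    _ = ∑ π : Equiv.Perm (Fin n), (c π * ∏ i, A (π i) i) * ((c π * B.det) * (c π * C.det)) := by
        refine Finset.sum_congr rfl fun π _ => by rw [hinner B π, hinner C π]
    _ = ∑ π : Equiv.Perm (Fin n), (c π * ∏ i, A (π i) i) * (B.det * C.det) := by
        refine Finset.sum_congr rfl fun π _ => ?_
        have h : (c π * ∏ i, A (π i) i) * ((c π * B.det) * (c π * C.det))
            = (c π * c π) * ((c π * ∏ i, A (π i) i) * (B.det * C.det)) := by ring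
        rw [h, hcsq π, one_mul]
    _ = (∑ π : Equiv.Perm (Fin n), c π * ∏ i, A (π i) i) * (B.det * C.det) := by
        rw [← Finset.sum_mul]
    _ = A.det * B.det * C.det := by rw [← Matrix.det_apply', mul_assoc]

/-- Corollary 1.1: every n×n×n subcube of the Cayley addition cube of ℤ/Nℤ
has a Latin transversal.  The subcube is given by injective families
`x, y, z : Fin n → ZMod N` of row, column and layer indices; a transversal is
given by permutations `σ, τ`. -/
theorem stmt4 (N n : ℕ) (hN : 0 < N) (hn : 0 < n)
    (x y z : Fin n → ZMod N)
    (hx : Function.Injective x) (hy : Function.Injective y)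
    (hz : Function.Injective z) :
    ∃ σ τ : Equiv.Perm (Fin n),
      Function.Injective fun i : Fin n => x i + y (σ i) + z (τ i) := by
  classical
  haveI : NeZero N := ⟨hN.ne'⟩
  -- a primitive N-th root of unity in ℂ, giving an injective character of ZMod N
  set ζ : ℂ := Complex.exp (2 * Real.pi * Complex.I / N) with hζdef
  have hζ : IsPrimitiveRoot ζ N := Complex.isPrimitiveRoot_exp N hN.ne'
  set χ : ZMod N → ℂ := fun a => ζ ^ a.val with hχ
  have hord : orderOf ζ = N := hζ.eq_orderOf.symm
  have hhom : ∀ a b : ZMod N, χ (a + b) = χ a * χ b := by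
    intro a b
    have key : ∀ m : ℕ, ζ ^ (m % N) = ζ ^ m := by
      intro m
      conv_rhs => rw [← pow_mod_orderOf ζ m]
      rw [hord]
    simp only [hχ]
    rw [ZMod.val_add, key, pow_add]
  have hinj : Function.Injective χ := by
    intro a b hab
    exact ZMod.val_injective N (hζ.pow_inj (ZMod.val_lt a) (ZMod.val_lt b) hab)
  set u : Fin n → ℂ := fun i => χ (x i) with hu
  set v : Fin n → ℂ := fun i => χ (y i) with hv
  set w : Fin n → ℂ := fun i => χ (z i) with hw
  have hui : Function.Injective u := hinj.comp hx
  have hvi : Function.Injective v := hinj.comp hy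
  have hwi : Function.Injective w := hinj.comp hz
  have hA : (Matrix.vandermonde u).det ≠ 0 := Matrix.det_vandermonde_ne_zero_iff.mpr hui
  have hB : (Matrix.vandermonde v).det ≠ 0 := Matrix.det_vandermonde_ne_zero_iff.mpr hvi
  have hC : (Matrix.vandermonde w).det ≠ 0 := Matrix.det_vandermonde_ne_zero_iff.mpr hwi
  have hne : (∑ σ : Equiv.Perm (Fin n), ∑ τ : Equiv.Perm (Fin n),
      ((Equiv.Perm.sign σ : ℤ) : ℂ) * ((Equiv.Perm.sign τ : ℤ) : ℂ) *
        (Matrix.of fun i j => Matrix.vandermonde u i j * Matrix.vandermonde v (σ i) j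
          * Matrix.vandermonde w (τ i) j).det) ≠ 0 := by
    rw [key_identity]
    exact mul_ne_zero (mul_ne_zero hA hB) hC
  obtain ⟨σ, -, hσ⟩ := Finset.exists_ne_zero_of_sum_ne_zero hne
  obtain ⟨τ, -, hτ⟩ := Finset.exists_ne_zero_of_sum_ne_zero hσ
  refine ⟨σ, τ, ?_⟩
  have hdet : (Matrix.of fun i j => Matrix.vandermonde u i j * Matrix.vandermonde v (σ i) j
      * Matrix.vandermonde w (τ i) j).det ≠ 0 := by
    intro h0
    exact hτ (by rw [h0, mul_zero])
  have hmix : (Matrix.of fun i j => Matrix.vandermonde u i j * Matrix.vandermonde v (σ i) j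
      * Matrix.vandermonde w (τ i) j)
      = Matrix.vandermonde (fun i => u i * v (σ i) * w (τ i)) := by
    ext i j
    simp only [Matrix.of_apply, Matrix.vandermonde]
    rw [mul_pow, mul_pow]
  rw [hmix] at hdet
  have ht : Function.Injective fun i => u i * v (σ i) * w (τ i) :=
    Matrix.det_vandermonde_ne_zero_iff.mp hdet
  intro i j hij
  apply ht
  have hval : ∀ k : Fin n, u k * v (σ k) * w (τ k) = χ (x k + y (σ k) + z (τ k)) := by
    intro k
    rw [hhom, hhom]
  simp only [hval]
  simpa using congrArg χ hij
end

section
/- Let G be an additive cyclic group of even order n, and let m be a positive integer. Suppose for each i = 1,…,m, a_{i1},…,a_{in} is an enumeration of all elements of G, and suppose the sums ∑_{i=1}^m a_{ij} (1 ≤ j ≤ n) are pairwise distinct. Then m is odd. -/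
lemma zmod_sum_ne (n : ℕ) [NeZero n] (he : Even n) : (∑ x : ZMod n, x) ≠ 0 := by
  have hn : 0 < n := Nat.pos_of_ne_zero (NeZero.ne n)
  obtain ⟨k, hk⟩ := he
  have hk0 : 0 < k := by omega
  have h1 : (∑ x : ZMod n, x) = ((∑ x : ZMod n, x.val : ℕ) : ZMod n) := by
    push_cast
    exact Finset.sum_congr rfl fun x _ => (ZMod.natCast_zmod_val x).symm
  have h2 : (∑ x : ZMod n, x.val) = ∑ i ∈ Finset.range n, i := by
    refine Finset.sum_nbij' (fun x => x.val) (fun i => (i : ZMod n)) ?_ ?_ ?_ ?_ ?_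
    · intro x _; exact Finset.mem_range.2 (ZMod.val_lt x)
    · intro i _; exact Finset.mem_univ _
    · intro x _; exact ZMod.natCast_zmod_val x
    · intro i hi; exact ZMod.val_cast_of_lt (Finset.mem_range.1 hi)
    · intro x _; rfl
  rw [h1, h2, Finset.sum_range_id]
  have h3 : n * (n - 1) / 2 = k * (n - 1) := by
    have : n * (n - 1) = 2 * (k * (n - 1)) := by rw [hk]; ring
    omega
  rw [h3]
  intro h
  rw [ZMod.natCast_eq_zero_iff] at h
  have h4 : n ∣ k * n - k * (n - 1) := Nat.dvd_sub (Dvd.intro_left k rfl) h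
  have h5 : k * n - k * (n - 1) = k := by
    have : 1 ≤ n := hn
    cases n with
    | zero => omega
    | succ m =>
      simp only [Nat.succ_sub_one]
      rw [Nat.mul_succ]
      omega
  rw [h5] at h4
  have := Nat.le_of_dvd hk0 h4
  omega

/-- Example 1.1: in a cyclic group of even order n, distinct column sums force m odd. -/
theorem stmt5 {G : Type*} [AddCommGroup G] [Fintype G] [IsAddCyclic G]
    (n m : ℕ) (hn : Fintype.card G = n) (heven : Even n) (hm : 0 < m)
    (a : Fin m → Fin n → G) (ha : ∀ i, Function.Bijective (a i))
    (hinj : Function.Injective fun j : Fin n => ∑ i, a i j) :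
    Odd m := by
  set S : G := ∑ x : G, x with hS
  -- n positive
  have hn0 : 0 < n := hn ▸ Fintype.card_pos
  haveI : NeZero n := ⟨hn0.ne'⟩
  -- S ≠ 0
  have hcard : Nat.card G = n := by rw [Nat.card_eq_fintype_card, hn]
  have e : ZMod n ≃+ G := hcard ▸ (zmodAddCyclicAddEquiv (by infer_instance : IsAddCyclic G))
  have hSne : S ≠ 0 := by
    have h1 : S = ∑ y : ZMod n, e y :=
      (Fintype.sum_bijective e e.bijective _ _ fun y => rfl).symm
    rw [h1, ← map_sum]
    intro h
    exact zmod_sum_ne n heven (e.injective (by simpa using h))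
  -- 2S = 0
  have hS2 : S + S = 0 := by
    have : S = -S := by
      rw [← Finset.sum_neg_distrib]
      exact Fintype.sum_bijective Neg.neg neg_involutive.bijective _ _ fun x => (neg_neg x).symm
    nth_rewrite 1 [this]
    exact neg_add_cancel S
  -- each row sums to S
  have hrow : ∀ i, ∑ j, a i j = S :=
    fun i => Fintype.sum_bijective (a i) (ha i) _ _ fun j => rfl
  -- column sums form a bijection Fin n → G
  have hbij : Function.Bijective fun j : Fin n => ∑ i, a i j :=
    (Fintype.bijective_iff_injective_and_card _).2 ⟨hinj, by simp [hn]⟩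
  have hcol : ∑ j, (∑ i, a i j) = S :=
    Fintype.sum_bijective _ hbij _ _ fun j => rfl
  -- m • S = S
  have hmS : m • S = S := by
    conv_rhs => rw [← hcol]
    rw [Finset.sum_comm]
    simp only [hrow]
    simp [Finset.card_univ]
  rcases Nat.even_or_odd m with he | ho
  · exfalso
    obtain ⟨t, rfl⟩ := he
    apply hSne
    rw [← hmS]
    calc (t + t) • S = t • S + t • S := add_nsmul S t t
      _ = t • (S + S) := (smul_add t S S).symm
      _ = 0 := by rw [hS2, smul_zero]
  · exact ho
end

section
/- Let c₁,…,c_n be elements of a commutative ring with identity. Then the coefficient of x₁^{n−1}⋯x_n^{n−1} y₁^{n−1}⋯y_n^{n−1} in the polynomial ∏_{1≤i<j≤n} (x_j − x_i)(y_j − y_i)(c_j x_j y_j − c_i x_i y_i) equals ∏_{1≤i<j≤n} (c_j − c_i). -/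
/-!
Each of the three factors is a Vandermonde product, so expanding it as a determinant gives
`∑ σ, sign σ • ∏ i, v i ^ σ i`. In the product of the three expansions, indexed by permutations
`τ, ρ, σ`, the monomial `x^(τ + σ) y^(ρ + σ)` equals `x^(n-1) y^(n-1)` exactly when
`τ = ρ = rev ∘ σ`. Then `sign τ * sign ρ = 1`, and the surviving coefficients
`sign σ • ∏ i, c i ^ σ i` add up to the Vandermonde expansion of `c`.
-/

open MvPolynomial Finset Equiv

theorem prod_Ioi_sub_eq_sum_sign_smul {R : Type*} [CommRing R] {n : ℕ} (v : Fin n → R) :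
    ∏ i, ∏ j ∈ Ioi i, (v j - v i) = ∑ σ : Perm (Fin n), Perm.sign σ • ∏ i, v i ^ (σ i : ℕ) := by
  rw [← Matrix.det_vandermonde, ← Matrix.det_transpose, Matrix.det_apply]
  rfl

theorem Fin.perm_add_eq_const_iff {n : ℕ} (τ σ : Perm (Fin n)) :
    (∀ i, (τ i : ℕ) + σ i = n - 1) ↔ τ = Fin.revPerm * σ := by
  simp only [Equiv.ext_iff, Perm.mul_apply, Fin.revPerm_apply, Fin.ext_iff, Fin.val_rev]
  refine forall_congr' fun i => ?_
  have := (σ i).isLt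
  omega

theorem Finsupp.equivFunOnFinite_symm_elim_eq_const_iff {α β M : Type*} [Finite α] [Finite β]
    [Zero M] (f : α → M) (g : β → M) (m : M) :
    equivFunOnFinite.symm (Sum.elim f g) = equivFunOnFinite.symm (fun _ => m) ↔
      (∀ a, f a = m) ∧ ∀ b, g b = m := by
  simp only [Equiv.apply_eq_iff_eq, funext_iff, Sum.forall, Sum.elim_inl, Sum.elim_inr]

namespace MvPolynomial

theorem prod_X_pow_eq_monomial_equivFunOnFinite {σ R : Type*} [Fintype σ] [CommSemiring R]
    (g : σ → ℕ) :
    ∏ a, (X a : MvPolynomial σ R) ^ g a = monomial (Finsupp.equivFunOnFinite.symm g) 1 := by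
  rw [monomial_eq, C_1, one_mul, Finsupp.prod_fintype _ _ fun _ => pow_zero _]
  rfl

theorem prod_X_pow_mul_prod_C_mul_X_mul_X_pow_eq_monomial {ι R : Type*} [Fintype ι]
    [CommSemiring R] (c : ι → R) (e f k : ι → ℕ) :
    (∏ i, (X (Sum.inl i) : MvPolynomial (ι ⊕ ι) R) ^ e i) * (∏ i, X (Sum.inr i) ^ f i) *
        ∏ i, (C (c i) * X (Sum.inl i) * X (Sum.inr i)) ^ k i =
      monomial (Finsupp.equivFunOnFinite.symm (Sum.elim (e + k) (f + k))) (∏ i, c i ^ k i) := by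
  rw [← mul_one (∏ i, c i ^ k i), ← C_mul_monomial, ← prod_X_pow_eq_monomial_equivFunOnFinite,
    Fintype.prod_sum_type]
  simp only [Sum.elim_inl, Sum.elim_inr, Pi.add_apply, pow_add, mul_pow, prod_mul_distrib,
    map_prod, map_pow]
  ring

end MvPolynomial

/-- Lemma 2.2. -/
theorem stmt8 {R : Type*} [CommRing R] (n : ℕ) (c : Fin n → R) :
    MvPolynomial.coeff
      (Finsupp.equivFunOnFinite.symm fun _ : Fin n ⊕ Fin n => n - 1)
      (∏ i : Fin n, ∏ j ∈ Finset.Ioi i,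
        ((X (Sum.inl j) - X (Sum.inl i)) * (X (Sum.inr j) - X (Sum.inr i)) *
          (C (c j) * X (Sum.inl j) * X (Sum.inr j)
            - C (c i) * X (Sum.inl i) * X (Sum.inr i))
          : MvPolynomial (Fin n ⊕ Fin n) R))
      = ∏ i : Fin n, ∏ j ∈ Finset.Ioi i, (c j - c i) := by
  simp only [prod_mul_distrib, prod_Ioi_sub_eq_sum_sign_smul, sum_mul, mul_sum,
    smul_mul_smul_comm, prod_X_pow_mul_prod_C_mul_X_mul_X_pow_eq_monomial, coeff_sum, coeff_smul,
    coeff_monomial, Finsupp.equivFunOnFinite_symm_elim_eq_const_iff, Pi.add_apply,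
    Fin.perm_add_eq_const_iff]
  simp only [ite_and, smul_ite, smul_zero, sum_ite_eq', mem_univ, if_true, Int.units_mul_self,
    one_mul]
end

section
/- Let F be a field, let A₁,…,A_n and B₁,…,B_n be subsets of F each of cardinality n, and let c₁,…,c_n be pairwise distinct elements of F. Then there exist pairwise distinct a₁ ∈ A₁,…,a_n ∈ A_n and pairwise distinct b₁ ∈ B₁,…,b_n ∈ B_n such that the products a₁b₁c₁,…,a_nb_nc_n are pairwise distinct. -/
open Finset Polynomial

section Aux

variable {F : Type*} [Field F] [DecidableEq F]

/-- Lagrange weight of a point of a finite set. -/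
noncomputable def lw (S : Finset F) (x : F) : F := ∏ y ∈ S.erase x, (x - y)⁻¹

/-- Weighted power sum appearing in the coefficient formula. -/
noncomputable def lf (S : Finset F) (d : ℕ) : F := ∑ x ∈ S, x ^ d * lw S x

lemma lf_eq (S : Finset F) (d : ℕ) (hd : d < S.card) :
    lf S d = if d = S.card - 1 then 1 else 0 := by
  have hinj : Set.InjOn id (S : Set F) := fun a _ b _ h => h
  have hdeg : ((X : F[X]) ^ d).degree < S.card := by
    simpa [degree_X_pow] using (by exact_mod_cast hd : ((d : ℕ) : WithBot ℕ) < (S.card : WithBot ℕ))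
  have h := Lagrange.eq_interpolate (f := (X : F[X]) ^ d) hinj hdeg
  have h2 := congrArg (fun p : F[X] => p.coeff (S.card - 1)) h.symm
  simp only [Lagrange.interpolate_apply] at h2
  rw [Polynomial.finset_sum_coeff] at h2
  have hbasis : ∀ x ∈ S, (Lagrange.basis S id x).coeff (S.card - 1) = lw S x := by
    intro x hx
    rw [Lagrange.basis_eq_prod_sub_inv_mul_nodal_div hx,
      ← Lagrange.nodal_erase_eq_nodal_div hx, coeff_C_mul]
    have hm : (Lagrange.nodal (S.erase x) id).Monic := Lagrange.nodal_monic
    have hnd : (Lagrange.nodal (S.erase x) id).natDegree = S.card - 1 := by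
      rw [Lagrange.natDegree_nodal, card_erase_of_mem hx]
    rw [← hnd, hm.coeff_natDegree, mul_one]
    rfl
  rw [Finset.sum_congr rfl (fun x hx => by rw [coeff_C_mul, hbasis x hx])] at h2
  simp only [eval_pow, eval_X, id_eq, coeff_X_pow] at h2
  rw [lf, h2]
  by_cases hcase : d = S.card - 1 <;> simp [hcase, eq_comm]

omit [DecidableEq F] in
lemma vand_sum (n : ℕ) (v : Fin n → F) :
    (∏ i : Fin n, ∏ j ∈ Ioi i, (v j - v i)) =
    ∑ σ : Equiv.Perm (Fin n), ((Equiv.Perm.sign σ : ℤ) : F) * ∏ i, v i ^ (σ i : ℕ) := by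
  rw [← Matrix.det_vandermonde v, ← Matrix.det_transpose, Matrix.det_apply']
  simp [Matrix.vandermonde]

lemma prod_lf {n : ℕ} (A : Fin n → Finset F) (hA : ∀ i, (A i).card = n)
    (σ ρ : Equiv.Perm (Fin n)) :
    ∏ i, lf (A i) ((σ i : ℕ) + (ρ i : ℕ)) =
      if (∀ i, (σ i : ℕ) + (ρ i : ℕ) = n - 1) then 1 else 0 := by
  split_ifs with h
  · apply Finset.prod_eq_one; intro i _
    rw [h i, lf_eq _ _ (by rw [hA i]; have := (σ i).is_lt; omega), hA i, if_pos rfl]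
  · push_neg at h
    obtain ⟨i0, hi0⟩ := h
    have hexists : ∃ i1, (σ i1 : ℕ) + (ρ i1 : ℕ) < n - 1 := by
      by_contra h1
      push_neg at h1
      have hs1 : ∑ i : Fin n, ((σ i : ℕ) + (ρ i : ℕ))
          = (∑ i ∈ range n, i) + (∑ i ∈ range n, i) := by
        rw [Finset.sum_add_distrib,
          Equiv.sum_comp σ (fun i : Fin n => (i : ℕ)),
          Equiv.sum_comp ρ (fun i : Fin n => (i : ℕ)),
          Fin.sum_univ_eq_sum_range (fun i => i) n]
      have hlt : ∑ _i : Fin n, (n - 1) < ∑ i : Fin n, ((σ i : ℕ) + (ρ i : ℕ)) :=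
        Finset.sum_lt_sum (fun i _ => h1 i)
          ⟨i0, Finset.mem_univ i0, lt_of_le_of_ne (h1 i0) (Ne.symm hi0)⟩
      rw [Finset.sum_const, card_univ, Fintype.card_fin, smul_eq_mul, hs1] at hlt
      have := Finset.sum_range_id_mul_two n
      omega
    obtain ⟨i1, hi1⟩ := hexists
    apply Finset.prod_eq_zero (Finset.mem_univ i1)
    have hlt1 : (σ i1 : ℕ) + (ρ i1 : ℕ) < (A i1).card := by rw [hA i1]; omega
    rw [lf_eq _ _ hlt1, hA i1, if_neg (by omega)]

lemma key_identity_s9 {n : ℕ} (A B : Fin n → Finset F)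
    (hA : ∀ i, (A i).card = n) (hB : ∀ i, (B i).card = n) (c : Fin n → F) :
    ∑ a ∈ Fintype.piFinset A, ∑ b ∈ Fintype.piFinset B,
      (∏ i, lw (A i) (a i)) * (∏ i, lw (B i) (b i)) *
        ((∏ i, ∏ j ∈ Ioi i, (a j - a i)) * (∏ i, ∏ j ∈ Ioi i, (b j - b i)) *
         (∏ i, ∏ j ∈ Ioi i, (a j * b j * c j - a i * b i * c i)))
    = ∏ i, ∏ j ∈ Ioi i, (c j - c i) := by
  have step1 : ∀ a b : Fin n → F,
      (∏ i, lw (A i) (a i)) * (∏ i, lw (B i) (b i)) *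
        ((∏ i, ∏ j ∈ Ioi i, (a j - a i)) * (∏ i, ∏ j ∈ Ioi i, (b j - b i)) *
         (∏ i, ∏ j ∈ Ioi i, (a j * b j * c j - a i * b i * c i)))
      = ∑ ρ : Equiv.Perm (Fin n), ∑ τ : Equiv.Perm (Fin n), ∑ σ : Equiv.Perm (Fin n),
          (((Equiv.Perm.sign σ : ℤ) : F) * ((Equiv.Perm.sign τ : ℤ) : F) *
            ((Equiv.Perm.sign ρ : ℤ) : F)) *
          ((∏ i, a i ^ ((σ i : ℕ) + (ρ i : ℕ)) * lw (A i) (a i)) *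
           (∏ i, b i ^ ((τ i : ℕ) + (ρ i : ℕ)) * lw (B i) (b i)) *
           (∏ i, c i ^ (ρ i : ℕ))) := by
    intro a b
    rw [vand_sum n a, vand_sum n b, vand_sum n (fun i => a i * b i * c i)]
    simp only [Finset.sum_mul_sum, Finset.mul_sum, Finset.sum_mul]
    refine Finset.sum_congr rfl fun ρ _ => Finset.sum_congr rfl fun τ _ =>
      Finset.sum_congr rfl fun σ _ => ?_
    simp only [pow_add, mul_pow, Finset.prod_mul_distrib]
    ring
  simp only [step1]
  conv_lhs => enter [2, a]; rw [Finset.sum_comm]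
  conv_lhs => rw [Finset.sum_comm]
  conv_lhs => enter [2, ρ, 2, a]; rw [Finset.sum_comm]
  conv_lhs => enter [2, ρ]; rw [Finset.sum_comm]
  conv_lhs => enter [2, ρ, 2, τ, 2, a]; rw [Finset.sum_comm]
  conv_lhs => enter [2, ρ, 2, τ]; rw [Finset.sum_comm]
  have step2 : ∀ ρ τ σ : Equiv.Perm (Fin n),
      ∑ a ∈ Fintype.piFinset A, ∑ b ∈ Fintype.piFinset B,
        (((Equiv.Perm.sign σ : ℤ) : F) * ((Equiv.Perm.sign τ : ℤ) : F) *
          ((Equiv.Perm.sign ρ : ℤ) : F)) *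
        ((∏ i, a i ^ ((σ i : ℕ) + (ρ i : ℕ)) * lw (A i) (a i)) *
         (∏ i, b i ^ ((τ i : ℕ) + (ρ i : ℕ)) * lw (B i) (b i)) *
         (∏ i, c i ^ (ρ i : ℕ)))
      = (((Equiv.Perm.sign σ : ℤ) : F) * ((Equiv.Perm.sign τ : ℤ) : F) *
          ((Equiv.Perm.sign ρ : ℤ) : F)) *
        ((∏ i, lf (A i) ((σ i : ℕ) + (ρ i : ℕ))) *
         (∏ i, lf (B i) ((τ i : ℕ) + (ρ i : ℕ))) *
         (∏ i, c i ^ (ρ i : ℕ))) := by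
    intro ρ τ σ
    simp only [lf]
    rw [Finset.prod_univ_sum, Finset.prod_univ_sum]
    simp only [Finset.sum_mul_sum, Finset.mul_sum, Finset.sum_mul]
    rw [Finset.sum_comm]
  simp only [step2]
  simp only [prod_lf A hA, prod_lf B hB]
  have hcond : ∀ σ ρ : Equiv.Perm (Fin n),
      (∀ i, (σ i : ℕ) + (ρ i : ℕ) = n - 1) ↔ σ = ρ.trans (Fin.revPerm) := by
    intro σ ρ
    constructor
    · intro h
      ext i
      have h1 := h i
      have h2 : (ρ i : ℕ) < n := (ρ i).is_lt
      have h3 : (σ i : ℕ) < n := (σ i).is_lt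
      simp only [Equiv.trans_apply, Fin.revPerm_apply, Fin.val_rev]
      omega
    · intro h i
      subst h
      simp only [Equiv.trans_apply, Fin.revPerm_apply, Fin.val_rev]
      have h2 : (ρ i : ℕ) < n := (ρ i).is_lt
      omega
  have collapse : ∀ ρ : Equiv.Perm (Fin n),
      (∑ τ : Equiv.Perm (Fin n), ∑ σ : Equiv.Perm (Fin n),
        (((Equiv.Perm.sign σ : ℤ) : F) * ((Equiv.Perm.sign τ : ℤ) : F) *
          ((Equiv.Perm.sign ρ : ℤ) : F)) *
        ((if (∀ i, (σ i : ℕ) + (ρ i : ℕ) = n - 1) then (1:F) else 0) *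
         (if (∀ i, (τ i : ℕ) + (ρ i : ℕ) = n - 1) then (1:F) else 0) *
         (∏ i, c i ^ (ρ i : ℕ))))
      = ((Equiv.Perm.sign ρ : ℤ) : F) * ∏ i, c i ^ (ρ i : ℕ) := by
    intro ρ
    set e := ρ.trans (Fin.revPerm) with he
    have hsign : ((Equiv.Perm.sign e : ℤ) : F) * ((Equiv.Perm.sign e : ℤ) : F) = 1 := by
      have h := Int.units_mul_self (Equiv.Perm.sign e)
      rw [← Int.cast_mul, ← Units.val_mul, h]
      simp
    rw [Finset.sum_eq_single_of_mem e (Finset.mem_univ e)]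
    · rw [Finset.sum_eq_single_of_mem e (Finset.mem_univ e)]
      · rw [if_pos ((hcond e ρ).mpr rfl)]
        rw [hsign]
        ring
      · intro σ _ hσ
        rw [if_neg (fun h => hσ ((hcond σ ρ).mp h))]
        ring
    · intro τ _ hτ
      apply Finset.sum_eq_zero
      intro σ _
      rw [if_neg (fun h => hτ ((hcond τ ρ).mp h))]
      ring
  simp only [collapse]
  rw [vand_sum n c]

omit [DecidableEq F] in
lemma inj_of_vand {n : ℕ} (v : Fin n → F)
    (hv : (∏ i : Fin n, ∏ j ∈ Ioi i, (v j - v i)) ≠ 0) : Function.Injective v := by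
  have hpair : ∀ p q : Fin n, p < q → v q ≠ v p := by
    intro p q hpq heq
    exact hv (Finset.prod_eq_zero (Finset.mem_univ p)
      (Finset.prod_eq_zero (Finset.mem_Ioi.mpr hpq) (by rw [heq, sub_self])))
  intro i j hij
  by_contra hne
  rcases lt_or_gt_of_ne hne with h | h
  · exact hpair i j h hij.symm
  · exact hpair j i h hij

end Aux

/-- Theorem 2.2. -/
theorem stmt9 {F : Type*} [Field F] (n : ℕ) (hn : 0 < n)
    (A B : Fin n → Finset F) (hA : ∀ i, (A i).card = n) (hB : ∀ i, (B i).card = n)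
    (c : Fin n → F) (hc : Function.Injective c) :
    ∃ a b : Fin n → F,
      (∀ i, a i ∈ A i) ∧ Function.Injective a ∧
      (∀ i, b i ∈ B i) ∧ Function.Injective b ∧
      Function.Injective fun i : Fin n => a i * b i * c i := by
  classical
  have hC : (∏ i : Fin n, ∏ j ∈ Finset.Ioi i, (c j - c i)) ≠ 0 := by
    rw [Finset.prod_ne_zero_iff]
    intro i _
    rw [Finset.prod_ne_zero_iff]
    intro j hj
    have hij : i < j := Finset.mem_Ioi.mp hj
    exact sub_ne_zero.mpr fun h => (ne_of_lt hij) (hc h).symm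
  have hkey := key_identity_s9 A B hA hB c
  rw [← hkey] at hC
  obtain ⟨a, ha, ha0⟩ := Finset.exists_ne_zero_of_sum_ne_zero hC
  obtain ⟨b, hb, hb0⟩ := Finset.exists_ne_zero_of_sum_ne_zero ha0
  obtain ⟨-, hP⟩ := mul_ne_zero_iff.mp hb0
  obtain ⟨hP12, hP3⟩ := mul_ne_zero_iff.mp hP
  obtain ⟨hP1, hP2⟩ := mul_ne_zero_iff.mp hP12
  refine ⟨a, b, fun i => ?_, inj_of_vand a hP1, fun i => ?_, inj_of_vand b hP2,
    inj_of_vand _ hP3⟩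
  · exact (Fintype.mem_piFinset.mp ha) i
  · exact (Fintype.mem_piFinset.mp hb) i
end

section
/- Let R be a commutative ring with identity, let A = (a_{ij}) be an n×n matrix over R, and let k, m₁,…,m_n be nonnegative integers with m₁ ≤ ⋯ ≤ m_n ≤ k. Then the coefficient of x₁^k⋯x_n^k in per((a_{ij} x_j^{m_i})_{1≤i,j≤n}) · (x₁ + ⋯ + x_n)^{kn − ∑ m_i} equals (kn − ∑_{i=1}^n m_i)! / ∏_{i=1}^n (k − m_i)! times per(A), where per denotes the permanent. -/
/-!
Expanding the permanent, the term of a permutation `σ` is `∏ i, A i (σ i)` times the monomial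
`∏ j, x_j ^ m (σ⁻¹ j)`. Multiplied by `(x₁ + ⋯ + x_n) ^ (kn - ∑ m_i)`, it contributes to
`x₁^k ⋯ x_n^k` the multinomial coefficient of `∏ j, x_j ^ (k - m (σ⁻¹ j))`, which does not depend on `σ` because
multinomial coefficients are invariant under permuting their arguments.
-/

open MvPolynomial

/-- The permanent of a square matrix. -/
def perMatrix {n : ℕ} {S : Type*} [CommRing S] (M : Matrix (Fin n) (Fin n) S) : S :=
  ∑ σ : Equiv.Perm (Fin n), ∏ i, M i (σ i)

open Finset

theorem Nat.multinomial_univ_comp_equiv {ι κ : Type*} [Fintype ι] [Fintype κ] (f : ι → ℕ)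
    (e : κ ≃ ι) : Nat.multinomial univ (f ∘ e) = Nat.multinomial univ f := by
  simp only [Nat.multinomial, Function.comp_apply, e.sum_comp f,
    e.prod_comp fun i => (f i).factorial]

namespace MvPolynomial

variable {R σ : Type*} [CommSemiring R] [Fintype σ]

theorem prod_univ_X_pow (f : σ → ℕ) :
    ∏ i, (X i : MvPolynomial σ R) ^ f i = monomial (Finsupp.equivFunOnFinite.symm f) 1 := by
  rw [prod_X_pow]
  congr 2
  ext i
  exact Finsupp.indicator_of_mem (mem_univ i) _

theorem coeff_equivFunOnFinite_sum_X_pow (f : σ → ℕ) {N : ℕ} (hf : ∑ i, f i = N) :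
    coeff (Finsupp.equivFunOnFinite.symm f) ((∑ i, X i : MvPolynomial σ R) ^ N)
      = Nat.multinomial univ f := by
  rw [coeff_sum_X_pow_of_fintype, Finsupp.sum_fintype _ _ (fun _ => rfl), if_pos (by simpa),
    Finsupp.multinomial_eq_of_support_subset (subset_univ _)]
  rfl

theorem prod_C_mul_X_pow_comp_equiv {ι : Type*} [Fintype ι] (a : ι → R) (m : ι → ℕ)
    (e : ι ≃ σ) :
    ∏ i, C (a i) * (X (e i) : MvPolynomial σ R) ^ m i
      = monomial (Finsupp.equivFunOnFinite.symm (m ∘ e.symm)) (∏ i, a i) := by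
  rw [prod_mul_distrib, ← map_prod,
    Fintype.prod_equiv e (fun i => X (e i) ^ m i) (fun j => X j ^ m (e.symm j)) (by simp),
    prod_univ_X_pow, C_mul_monomial, mul_one]
  rfl

theorem coeff_const_monomial_mul_sum_X_pow {k : ℕ} (g : σ → ℕ) (hg : ∀ i, g i ≤ k)
    (a : R) :
    coeff (Finsupp.equivFunOnFinite.symm fun _ => k)
      (monomial (Finsupp.equivFunOnFinite.symm g) a * (∑ i, X i) ^ ∑ i, (k - g i))
      = Nat.multinomial univ (fun i => k - g i) • a := by
  have hsplit : Finsupp.equivFunOnFinite.symm (fun _ => k)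
      = Finsupp.equivFunOnFinite.symm g + Finsupp.equivFunOnFinite.symm (fun i => k - g i) := by
    ext i
    simp [Nat.add_sub_cancel' (hg i)]
  rw [hsplit, coeff_monomial_mul, coeff_equivFunOnFinite_sum_X_pow _ rfl, nsmul_eq_mul, mul_comm]

end MvPolynomial

theorem stmt13_general {R : Type*} [CommRing R] (n k : ℕ)
    (A : Matrix (Fin n) (Fin n) R) (m : Fin n → ℕ)
    (hk : ∀ i, m i ≤ k) :
    MvPolynomial.coeff (Finsupp.equivFunOnFinite.symm fun _ : Fin n => k)
      (perMatrix (Matrix.of fun i j : Fin n => (C (A i j) * X j ^ m i :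
          MvPolynomial (Fin n) R)) *
        (∑ s : Fin n, X s) ^ (k * n - ∑ i, m i))
      = (Nat.multinomial Finset.univ fun i : Fin n => k - m i) • perMatrix A := by
  have hdeg (σ : Equiv.Perm (Fin n)) : ∑ j, (k - (m ∘ σ.symm) j) = k * n - ∑ i, m i := by
    rw [Function.comp_def, σ.symm.sum_comp (fun i => k - m i), sum_tsub_distrib _ fun i _ => hk i]
    simp [mul_comm]
  simp only [perMatrix, Matrix.of_apply, sum_mul, coeff_sum, smul_sum]
  refine sum_congr rfl fun σ _ => ?_
  rw [prod_C_mul_X_pow_comp_equiv, ← hdeg σ,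
    coeff_const_monomial_mul_sum_X_pow (m ∘ σ.symm) fun j => hk _,
    ← Nat.multinomial_univ_comp_equiv (fun i => k - m i) σ.symm]
  rfl

/-- Theorem 3.2(ii), equation (3.3). -/
theorem stmt13 {R : Type*} [CommRing R] (n k : ℕ)
    (A : Matrix (Fin n) (Fin n) R) (m : Fin n → ℕ)
    (hmono : Monotone m) (hk : ∀ i, m i ≤ k) :
    MvPolynomial.coeff (Finsupp.equivFunOnFinite.symm fun _ : Fin n => k)
      (perMatrix (Matrix.of fun i j : Fin n => (C (A i j) * X j ^ m i :
          MvPolynomial (Fin n) R)) *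
        (∑ s : Fin n, X s) ^ (k * n - ∑ i, m i))
      = (Nat.multinomial Finset.univ fun i : Fin n => k - m i) • perMatrix A :=
  stmt13_general n k A m hk
end
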